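/- With w_n(k) as above, lim_{k→∞} Σ_{n=0}^∞ 2^{-d/2} w_n(k) (-z²/4)^n = (2α)^{-d/2} e^{-z²/(4α)} for every z ≥ 0, i.e., the radial Fourier transforms F_d ψ_{ℓ,k}(z) converge pointwise (and uniformly on compact subsets of [0,∞)) to the Fourier transform of the Gaussian e^{-αy²}. -/

import Mathlib

open Real Filter

/-- The coefficient w_n(k) in the series expansion of the Fourier transform of the
normalised equal area Wendland function. -/
noncomputable def wcoef (d : ℕ) (α k : ℝ) (n : ℕ) : ℝ :=
  let l : ℝ := (⌊(d : ℝ) / 2 + k⌋ : ℝ) + 1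
  let δ : ℝ := (l + 2 * k + 1) * Real.Gamma (k + 1/2) / (2 * Real.sqrt α * Real.Gamma (k + 1))
  Real.Gamma ((d : ℝ) + 2 * k + 2 * n) * Real.Gamma (l + 2 * k + 1) * Real.Gamma k *
      δ ^ (d + 2 * n) /
    (Real.Gamma (2 * k) * Real.Gamma (l + 2 * k + 1 + (d : ℝ) + 2 * n) *
      Real.Gamma (k + (d : ℝ) / 2 + n) * n.factorial)

/-- The Fourier transform of ψ_{ℓ,k}, expressed by its power series in z. -/
noncomputable def fourierPsi (d : ℕ) (α k : ℝ) (z : ℝ) : ℝ :=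
  (2:ℝ) ^ (-(d : ℝ) / 2) * ∑' n : ℕ, wcoef d α k n * (-z ^ 2 / 4) ^ n

/-! ### Auxiliary machinery: the Gamma ratio function -/

/-- `rr a x = Γ(x+a)/(Γ(x) x^a)`, which tends to `1` as `x → ∞`. -/
noncomputable def rr (a x : ℝ) : ℝ := Real.Gamma (x + a) / (Real.Gamma x * x ^ a)

lemma rr_pos {a x : ℝ} (ha : 0 ≤ a) (hx : 0 < x) : 0 < rr a x := by
  apply div_pos (Real.Gamma_pos_of_pos (by linarith))
  exact mul_pos (Real.Gamma_pos_of_pos hx) (Real.rpow_pos_of_pos hx a)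

lemma Gamma_eq_rr {a x : ℝ} (_ : 0 ≤ a) (hx : 0 < x) :
    Real.Gamma (x + a) = rr a x * (Real.Gamma x * x ^ a) := by
  rw [rr, div_mul_cancel₀]
  exact (mul_pos (Real.Gamma_pos_of_pos hx) (Real.rpow_pos_of_pos hx a)).ne'

lemma gamma_upper {s x : ℝ} (hs0 : 0 ≤ s) (hs1 : s ≤ 1) (hx : 0 < x) :
    Real.Gamma (x + s) ≤ Real.Gamma x * x ^ s := by
  have h := Real.convexOn_log_Gamma.2 (Set.mem_Ioi.2 hx) (Set.mem_Ioi.2 (by linarith : (0:ℝ) < x + 1))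
    (by linarith : (0:ℝ) ≤ 1 - s) hs0 (by ring)
  simp only [smul_eq_mul, Function.comp_apply] at h
  have harg : (1 - s) * x + s * (x + 1) = x + s := by ring
  rw [harg] at h
  have h1 : Real.Gamma (x + s) = Real.exp (Real.log (Real.Gamma (x + s))) :=
    (Real.exp_log (Real.Gamma_pos_of_pos (by linarith))).symm
  calc Real.Gamma (x + s) ≤ Real.exp ((1-s) * Real.log (Real.Gamma x) + s * Real.log (Real.Gamma (x+1))) := by
        rw [h1]; exact Real.exp_le_exp.2 h
    _ = Real.Gamma x ^ (1-s) * Real.Gamma (x+1) ^ s := by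
        rw [Real.exp_add, Real.rpow_def_of_pos (Real.Gamma_pos_of_pos hx),
          Real.rpow_def_of_pos (Real.Gamma_pos_of_pos (by linarith)), mul_comm (Real.log _),
          mul_comm (Real.log _)]
    _ = Real.Gamma x * x ^ s := by
        rw [Real.Gamma_add_one hx.ne', Real.mul_rpow hx.le (Real.Gamma_pos_of_pos hx).le]
        rw [show Real.Gamma x ^ (1-s) * (x ^ s * Real.Gamma x ^ s)
            = (Real.Gamma x ^ (1-s) * Real.Gamma x ^ s) * x ^ s by ring,
          ← Real.rpow_add (Real.Gamma_pos_of_pos hx)]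
        norm_num

lemma gamma_lower {s x : ℝ} (hs0 : 0 ≤ s) (hs1 : s ≤ 1) (hx : 0 < x) :
    x * Real.Gamma x ≤ Real.Gamma (x + s) * (x + s) ^ (1 - s) := by
  have h := Real.convexOn_log_Gamma.2 (Set.mem_Ioi.2 (by linarith : (0:ℝ) < x + s))
    (Set.mem_Ioi.2 (by linarith : (0:ℝ) < x + s + 1)) hs0 (by linarith : (0:ℝ) ≤ 1 - s) (by ring)
  simp only [smul_eq_mul, Function.comp_apply] at h
  have harg : s * (x + s) + (1 - s) * (x + s + 1) = x + 1 := by ring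
  rw [harg] at h
  have hgs : (0:ℝ) < Real.Gamma (x + s) := Real.Gamma_pos_of_pos (by linarith)
  calc x * Real.Gamma x = Real.Gamma (x + 1) := (Real.Gamma_add_one hx.ne').symm
    _ = Real.exp (Real.log (Real.Gamma (x+1))) := (Real.exp_log (Real.Gamma_pos_of_pos (by linarith))).symm
    _ ≤ Real.exp (s * Real.log (Real.Gamma (x+s)) + (1-s) * Real.log (Real.Gamma (x+s+1))) :=
        Real.exp_le_exp.2 h
    _ = Real.Gamma (x+s) ^ s * Real.Gamma (x+s+1) ^ (1-s) := by
        rw [Real.exp_add, Real.rpow_def_of_pos hgs,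
          Real.rpow_def_of_pos (Real.Gamma_pos_of_pos (by linarith)), mul_comm (Real.log _),
          mul_comm (Real.log _)]
    _ = Real.Gamma (x + s) * (x + s) ^ (1 - s) := by
        rw [Real.Gamma_add_one (by positivity), Real.mul_rpow (by positivity) hgs.le]
        rw [show Real.Gamma (x+s) ^ s * ((x+s) ^ (1-s) * Real.Gamma (x+s) ^ (1-s))
            = (Real.Gamma (x+s) ^ s * Real.Gamma (x+s) ^ (1-s)) * (x+s) ^ (1-s) by ring,
          ← Real.rpow_add hgs]
        norm_num

lemma rr_le_one {s x : ℝ} (hs0 : 0 ≤ s) (hs1 : s ≤ 1) (hx : 0 < x) : rr s x ≤ 1 := by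
  rw [rr, div_le_one (mul_pos (Real.Gamma_pos_of_pos hx) (Real.rpow_pos_of_pos hx s))]
  exact gamma_upper hs0 hs1 hx

lemma rr_ge {s x : ℝ} (hs0 : 0 ≤ s) (hs1 : s ≤ 1) (hx : 0 < x) :
    (x / (x + s)) ^ (1 - s) ≤ rr s x := by
  rw [rr, le_div_iff₀ (mul_pos (Real.Gamma_pos_of_pos hx) (Real.rpow_pos_of_pos hx s))]
  have h := gamma_lower hs0 hs1 hx
  have hxs : (0:ℝ) < x + s := by linarith
  have key : (x / (x + s)) ^ (1 - s) * (Real.Gamma x * x ^ s) * (x + s) ^ (1-s)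
      = x * Real.Gamma x := by
    rw [Real.div_rpow hx.le hxs.le]
    rw [show x ^ (1-s) / (x+s) ^ (1-s) * (Real.Gamma x * x ^ s) * (x+s) ^ (1-s)
        = (x ^ (1-s) * x ^ s) * Real.Gamma x * ((x+s) ^ (1-s) / (x+s) ^ (1-s)) by ring,
      ← Real.rpow_add hx, div_self (Real.rpow_pos_of_pos hxs _).ne']
    norm_num
  nlinarith [Real.rpow_pos_of_pos hxs (1-s), Real.rpow_pos_of_pos hx (1-s),
    Real.rpow_pos_of_pos hx s, Real.Gamma_pos_of_pos hx,
    Real.Gamma_pos_of_pos (show (0:ℝ) < x + s by linarith)]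

lemma rr_add_one {a x : ℝ} (ha : 0 ≤ a) (hx : 0 < x) :
    rr (a + 1) x = rr a x * ((x + a) / x) := by
  rw [rr, rr, ← add_assoc, Real.Gamma_add_one (by positivity : x + a ≠ 0),
    Real.rpow_add_one hx.ne']
  field_simp

lemma rr_add_nat (b : ℝ) (hb : 0 ≤ b) (N : ℕ) {x : ℝ} (hx : 0 < x) :
    rr (b + N) x = rr b x * ∏ j ∈ Finset.range N, ((x + b + j) / x) := by
  induction N with
  | zero => simp
  | succ n ih =>
    have : b + (n + 1 : ℕ) = (b + n) + 1 := by push_cast; ring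
    rw [this, rr_add_one (by positivity) hx, ih, Finset.prod_range_succ]
    rw [show x + (b + (n:ℝ)) = x + b + n by ring]; ring

lemma tendsto_frac (s : ℝ) : Tendsto (fun x : ℝ => x / (x + s)) atTop (nhds 1) := by
  have h1 : Tendsto (fun x : ℝ => s / (x + s)) atTop (nhds 0) :=
    Tendsto.div_atTop tendsto_const_nhds (tendsto_atTop_add_const_right _ s tendsto_id)
  have h2 : Tendsto (fun x : ℝ => 1 - s / (x + s)) atTop (nhds 1) := by
    simpa using tendsto_const_nhds.sub h1
  apply h2.congr'
  filter_upwards [eventually_gt_atTop (1 + |s|)] with x hx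
  have hxs : x + s ≠ 0 := by
    have : |s| < x := by linarith
    cases abs_lt.1 this with | intro a b => intro h; linarith
  field_simp
  ring

lemma rr_tendsto_base {s : ℝ} (hs0 : 0 ≤ s) (hs1 : s ≤ 1) :
    Tendsto (rr s) atTop (nhds 1) := by
  have hlow : Tendsto (fun x : ℝ => (x / (x + s)) ^ (1 - s)) atTop (nhds 1) := by
    have := (tendsto_frac s).rpow_const (p := 1 - s) (Or.inl one_ne_zero)
    simpa using this
  apply tendsto_of_tendsto_of_tendsto_of_le_of_le' hlow tendsto_const_nhds
  · filter_upwards [eventually_gt_atTop (0:ℝ)] with x hx using rr_ge hs0 hs1 hx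
  · filter_upwards [eventually_gt_atTop (0:ℝ)] with x hx using rr_le_one hs0 hs1 hx

lemma rr_tendsto {a : ℝ} (ha : 0 ≤ a) : Tendsto (rr a) atTop (nhds 1) := by
  obtain ⟨b, N, hb0, hb1, rfl⟩ : ∃ (b : ℝ) (N : ℕ), 0 ≤ b ∧ b ≤ 1 ∧ a = b + N := by
    refine ⟨a - ⌊a⌋₊, ⌊a⌋₊, by
      have := Nat.floor_le ha; linarith, by
      have := (Nat.lt_floor_add_one a).le; linarith, by ring⟩
  have hprod : Tendsto (fun x : ℝ => ∏ j ∈ Finset.range N, ((x + b + j) / x)) atTop (nhds 1) := by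
    have : Tendsto (fun x : ℝ => ∏ j ∈ Finset.range N, ((x + b + j) / x)) atTop
        (nhds (∏ j ∈ Finset.range N, 1)) := by
      apply tendsto_finset_prod
      intro j _
      have h1 : Tendsto (fun x : ℝ => (b + j) / x) atTop (nhds 0) :=
        Tendsto.div_atTop tendsto_const_nhds tendsto_id
      have h2 : Tendsto (fun x : ℝ => 1 + (b + j) / x) atTop (nhds 1) := by
        simpa using tendsto_const_nhds.add h1
      apply h2.congr'
      filter_upwards [eventually_gt_atTop (0:ℝ)] with x hx
      field_simp
      ring
    simpa using this
  have := (rr_tendsto_base hb0 hb1).mul hprod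
  rw [mul_one] at this
  apply this.congr'
  filter_upwards [eventually_gt_atTop (0:ℝ)] with x hx
  exact (rr_add_nat b hb0 N hx).symm

lemma rr_ge_half {a x : ℝ} (ha : 0 ≤ a) (hx : 1 ≤ x) : 1/2 ≤ rr a x := by
  have hx0 : (0:ℝ) < x := by linarith
  obtain ⟨b, N, hb0, hb1, rfl⟩ : ∃ (b : ℝ) (N : ℕ), 0 ≤ b ∧ b ≤ 1 ∧ a = b + N := by
    refine ⟨a - ⌊a⌋₊, ⌊a⌋₊, by
      have := Nat.floor_le ha; linarith, by
      have := (Nat.lt_floor_add_one a).le; linarith, by ring⟩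
  rw [rr_add_nat b hb0 N hx0]
  have h1 : 1/2 ≤ rr b x := by
    have hfrac : x / (x + b) ≤ 1 := by
      rw [div_le_one (by linarith)]; linarith
    have hfrac0 : 0 < x / (x + b) := by positivity
    have h2 : x / (x + b) ≤ (x / (x + b)) ^ (1 - b) := by
      calc x / (x + b) = (x / (x + b)) ^ (1:ℝ) := (Real.rpow_one _).symm
        _ ≤ (x / (x + b)) ^ (1 - b) := Real.rpow_le_rpow_of_exponent_ge hfrac0 hfrac (by linarith)
    have h3 : (1:ℝ)/2 ≤ x / (x + b) := by
      rw [le_div_iff₀ (by linarith)]; linarith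
    linarith [rr_ge hb0 hb1 hx0]
  have h2 : (1:ℝ) ≤ ∏ j ∈ Finset.range N, ((x + b + j) / x) := by
    have := Finset.prod_le_prod (s := Finset.range N) (f := fun _ : ℕ => (1:ℝ))
      (g := fun j => (x + b + j) / x) (fun i _ => zero_le_one)
      (fun j _ => by
        show (1:ℝ) ≤ (x + b + j) / x
        rw [le_div_iff₀ hx0]
        have : (0:ℝ) ≤ (j:ℝ) := Nat.cast_nonneg j
        linarith)
    simpa using this
  calc (1:ℝ)/2 ≤ rr b x := h1
    _ = rr b x * 1 := (mul_one _).symm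
    _ ≤ rr b x * ∏ j ∈ Finset.range N, ((x + b + j) / x) := by
        apply mul_le_mul_of_nonneg_left h2 (rr_pos hb0 hx0).le

lemma rr_nat_mono {N : ℕ} {x y : ℝ} (hx : 0 < x) (hxy : x ≤ y) :
    rr N x ≤ rr N y * (y / x) ^ N := by
  have hy : 0 < y := lt_of_lt_of_le hx hxy
  have prodform : ∀ {z : ℝ}, 0 < z → rr (N:ℝ) z = ∏ j ∈ Finset.range N, ((z + j) / z) := by
    intro z hz
    simpa [rr, Real.rpow_zero, div_self (Real.Gamma_pos_of_pos hz).ne'] using rr_add_nat 0 le_rfl N hz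
  have hrhs : ∏ j ∈ Finset.range N, ((y + j) / x) = rr N y * (y / x) ^ N := by
    calc ∏ j ∈ Finset.range N, ((y + (j:ℝ)) / x)
        = ∏ j ∈ Finset.range N, ((y + (j:ℝ)) / y * (y / x)) := by
          apply Finset.prod_congr rfl
          intro j _
          field_simp
      _ = (∏ j ∈ Finset.range N, ((y + (j:ℝ)) / y)) * ∏ _j ∈ Finset.range N, (y / x) :=
          Finset.prod_mul_distrib
      _ = rr N y * (y / x) ^ N := by
          rw [prodform hy, Finset.prod_const, Finset.card_range]
  rw [prodform hx, ← hrhs]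
  apply Finset.prod_le_prod
  · intro j _; positivity
  · intro j _
    gcongr

/-! ### The exact form of `wcoef` -/

lemma helper_alg (p : ℕ) (F r1 r2 r3 r4 G2 Gl Gk L k s t : ℝ)
    (hks : k = s^2) (hG2 : G2 ≠ 0) (hGl : Gl ≠ 0) (hGk : Gk ≠ 0) (hs : s ≠ 0) (ht : t ≠ 0)
    (hF : F ≠ 0) (hr2 : r2 ≠ 0) (hr3 : r3 ≠ 0) (hL : L ≠ 0) :
    r1 * (G2 * (2*k)^p) * Gl * Gk * (L * (r4 * (Gk * s)) / (2 * t * (k * Gk))) ^ p /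
      (G2 * (r2 * (Gl * L^p)) * (r3 * (Gk * s^p)) * F) =
    r1 * r4^p / (r2 * r3) * ((t^p * F)⁻¹) := by
  subst hks
  rw [div_pow, mul_pow, mul_pow, mul_pow, mul_pow, mul_pow]
  field_simp
  ring

set_option maxHeartbeats 1000000 in
lemma wcoef_eq (d n : ℕ) {α k : ℝ} (hα : 0 < α) (hk : 0 < k) :
    wcoef d α k n =
      (rr (d + 2*n : ℕ) (2*k) * rr (1/2) k ^ (d + 2*n)) /
        (rr (d + 2*n : ℕ) ((⌊(d : ℝ) / 2 + k⌋ : ℝ) + 1 + 2*k + 1) * rr ((d:ℝ)/2 + n) k) *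
      ((Real.sqrt α) ^ (d + 2*n) * (n.factorial : ℝ))⁻¹ := by
  set p : ℕ := d + 2*n with hp
  set L : ℝ := (⌊(d : ℝ) / 2 + k⌋ : ℝ) + 1 + 2*k + 1 with hLdef
  have hL : 0 < L := by
    have h1 : (d:ℝ)/2 + k < (⌊(d : ℝ) / 2 + k⌋ : ℝ) + 1 := Int.lt_floor_add_one _
    have : (0:ℝ) ≤ (d:ℝ)/2 := by positivity
    rw [hLdef]; linarith
  have h2k : (0:ℝ) < 2*k := by linarith
  set s : ℝ := Real.sqrt k with hsdef
  set t : ℝ := Real.sqrt α with htdef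
  have hs0 : 0 < s := Real.sqrt_pos.2 hk
  have ht0 : 0 < t := Real.sqrt_pos.2 hα
  have hks : k = s^2 := (Real.sq_sqrt hk.le).symm
  have hGk : 0 < Real.Gamma k := Real.Gamma_pos_of_pos hk
  have hG2 : 0 < Real.Gamma (2*k) := Real.Gamma_pos_of_pos h2k
  have hGL : 0 < Real.Gamma L := Real.Gamma_pos_of_pos hL
  have h1 : Real.Gamma ((d : ℝ) + 2 * k + 2 * n) = rr p (2*k) * (Real.Gamma (2*k) * (2*k)^p) := by
    have harg : (d : ℝ) + 2 * k + 2 * n = 2*k + (p:ℝ) := by rw [hp]; push_cast; ring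
    rw [harg, Gamma_eq_rr (by positivity) h2k, Real.rpow_natCast]
  have h2 : Real.Gamma (L + (d:ℝ) + 2*n) = rr p L * (Real.Gamma L * L^p) := by
    have harg : L + (d:ℝ) + 2*n = L + (p:ℝ) := by rw [hp]; push_cast; ring
    rw [harg, Gamma_eq_rr (by positivity) hL, Real.rpow_natCast]
  have hkq : k ^ ((d:ℝ)/2 + n) = s ^ p := by
    have : (d:ℝ)/2 + n = (1/2 : ℝ) * (p:ℝ) := by rw [hp]; push_cast; ring
    rw [this, Real.rpow_mul hk.le, ← Real.sqrt_eq_rpow, ← hsdef, Real.rpow_natCast]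
  have h3 : Real.Gamma (k + (d:ℝ)/2 + n) = rr ((d:ℝ)/2 + n) k * (Real.Gamma k * s ^ p) := by
    rw [show k + (d:ℝ)/2 + (n:ℝ) = k + ((d:ℝ)/2 + n) by ring,
      Gamma_eq_rr (by positivity) hk, hkq]
  have h4 : Real.Gamma (k + 1/2) = rr (1/2) k * (Real.Gamma k * s) := by
    rw [Gamma_eq_rr (by norm_num) hk, ← Real.sqrt_eq_rpow, ← hsdef]
  have h5 : Real.Gamma (k + 1) = k * Real.Gamma k := Real.Gamma_add_one hk.ne'
  have hr2 : 0 < rr p L := rr_pos (by positivity) hL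
  have hr3 : 0 < rr ((d:ℝ)/2 + n) k := rr_pos (by positivity) hk
  have hfac : (0:ℝ) < (n.factorial : ℝ) := by positivity
  unfold wcoef
  simp only [← hLdef]
  rw [show (⌊(d : ℝ) / 2 + k⌋ : ℝ) + 1 + 2 * k + 1 + (d:ℝ) + 2*(n:ℝ) = L + (d:ℝ) + 2*n by
    rw [hLdef]]
  rw [h1, h2, h3, h4, h5]
  exact helper_alg p (n.factorial : ℝ) _ _ _ _ _ _ _ L k s t hks hG2.ne' hGL.ne' hGk.ne'
    hs0.ne' ht0.ne' hfac.ne' hr2.ne' hr3.ne' hL.ne'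

/-! ### Limits and bounds for `wcoef` along `k = (m+1)/2` -/

noncomputable def ccoef (d : ℕ) (α : ℝ) (n : ℕ) : ℝ :=
  ((Real.sqrt α) ^ (d + 2*n) * (n.factorial : ℝ))⁻¹

lemma ccoef_def (d : ℕ) (α : ℝ) (n : ℕ) :
    ccoef d α n = ((Real.sqrt α) ^ (d + 2*n) * (n.factorial : ℝ))⁻¹ := rfl

lemma ccoef_pos {d : ℕ} {α : ℝ} (hα : 0 < α) (n : ℕ) : 0 < ccoef d α n := by
  have := Real.sqrt_pos.2 hα
  rw [ccoef]
  positivity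

lemma kk_tendsto : Tendsto (fun m : ℕ => ((m:ℝ) + 1) / 2) atTop atTop := by
  apply Tendsto.atTop_div_const (by norm_num : (0:ℝ) < 2)
  exact tendsto_atTop_add_const_right _ 1 tendsto_natCast_atTop_atTop

lemma LL_lower {d : ℕ} {k : ℝ} (hk : 0 < k) :
    3*k + 1 ≤ (⌊(d : ℝ) / 2 + k⌋ : ℝ) + 1 + 2*k + 1 := by
  have h1 : (d:ℝ)/2 + k < (⌊(d : ℝ) / 2 + k⌋ : ℝ) + 1 := Int.lt_floor_add_one _
  have : (0:ℝ) ≤ (d:ℝ)/2 := by positivity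
  linarith

lemma LL_upper {d : ℕ} (k : ℝ) :
    (⌊(d : ℝ) / 2 + k⌋ : ℝ) + 1 + 2*k + 1 ≤ 3*k + (d:ℝ)/2 + 2 := by
  have h1 : (⌊(d : ℝ) / 2 + k⌋ : ℝ) ≤ (d:ℝ)/2 + k := Int.floor_le _
  linarith

lemma LL_tendsto (d : ℕ) :
    Tendsto (fun m : ℕ => (⌊(d : ℝ) / 2 + ((m:ℝ) + 1) / 2⌋ : ℝ) + 1 + 2*(((m:ℝ) + 1) / 2) + 1)
      atTop atTop := by
  apply tendsto_atTop_mono (fun m => LL_lower (by positivity))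
  apply tendsto_atTop_add_const_right
  exact (kk_tendsto.const_mul_atTop (by norm_num : (0:ℝ) < 3))

lemma wcoef_tendsto (d : ℕ) {α : ℝ} (hα : 0 < α) (n : ℕ) :
    Tendsto (fun m : ℕ => wcoef d α (((m:ℝ) + 1) / 2) n) atTop (nhds (ccoef d α n)) := by
  have hkpos : ∀ m : ℕ, (0:ℝ) < ((m:ℝ) + 1) / 2 := fun m => by positivity
  have h2k : Tendsto (fun m : ℕ => 2 * (((m:ℝ) + 1) / 2)) atTop atTop :=
    kk_tendsto.const_mul_atTop (by norm_num : (0:ℝ) < 2)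
  have hr1 : Tendsto (fun m : ℕ => rr ((d + 2*n : ℕ) : ℝ) (2 * (((m:ℝ) + 1) / 2))) atTop (nhds 1) :=
    (rr_tendsto (by positivity)).comp h2k
  have hr4 : Tendsto (fun m : ℕ => rr (1/2) (((m:ℝ) + 1) / 2) ^ (d + 2*n)) atTop
      (nhds 1) := by
    simpa using ((rr_tendsto (by norm_num : (0:ℝ) ≤ 1/2)).comp kk_tendsto).pow (d + 2*n)
  have hr2 : Tendsto (fun m : ℕ =>
      rr ((d + 2*n : ℕ) : ℝ)
        ((⌊(d : ℝ) / 2 + ((m:ℝ) + 1) / 2⌋ : ℝ) + 1 + 2*(((m:ℝ) + 1) / 2) + 1)) atTop (nhds 1) :=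
    (rr_tendsto (by positivity)).comp (LL_tendsto d)
  have hr3 : Tendsto (fun m : ℕ => rr ((d:ℝ)/2 + n) (((m:ℝ) + 1) / 2)) atTop (nhds 1) :=
    (rr_tendsto (by positivity)).comp kk_tendsto
  have key := ((hr1.mul hr4).div (hr2.mul hr3) (by norm_num)).mul_const (ccoef d α n)
  rw [show (1:ℝ) * 1 / (1 * 1) * ccoef d α n = ccoef d α n by norm_num] at key
  apply key.congr
  intro m
  rw [ccoef_def]
  exact (wcoef_eq d n hα (hkpos m)).symm

lemma wcoef_nonneg (d n : ℕ) {α k : ℝ} (hα : 0 < α) (hk : 0 < k) :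
    0 ≤ wcoef d α k n := by
  rw [wcoef_eq d n hα hk]
  have hL : (0:ℝ) < (⌊(d : ℝ) / 2 + k⌋ : ℝ) + 1 + 2*k + 1 := by
    have := LL_lower (d := d) hk; linarith
  have q1 := rr_pos (show (0:ℝ) ≤ ((d + 2*n : ℕ):ℝ) by positivity) (show (0:ℝ) < 2*k by linarith)
  have q2 := rr_pos (show (0:ℝ) ≤ (1:ℝ)/2 by norm_num) hk
  have q3 := rr_pos (show (0:ℝ) ≤ ((d + 2*n : ℕ):ℝ) by positivity) hL
  have q4 := rr_pos (show (0:ℝ) ≤ (d:ℝ)/2 + n by positivity) hk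
  have q5 := Real.sqrt_pos.2 hα
  have q6 : (0:ℝ) < (n.factorial : ℝ) := by positivity
  positivity

lemma wcoef_le_bound (d n : ℕ) {α k : ℝ} (hα : 0 < α) (hk : (d:ℝ)/2 + 2 ≤ k) :
    wcoef d α k n ≤ 2 ^ (d + 2*n + 1) * ccoef d α n := by
  have hk1 : (1:ℝ) ≤ k := by
    have : (0:ℝ) ≤ (d:ℝ)/2 := by positivity
    linarith
  have hk0 : (0:ℝ) < k := by linarith
  set L : ℝ := (⌊(d : ℝ) / 2 + k⌋ : ℝ) + 1 + 2*k + 1 with hLdef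
  have hL : 0 < L := by have := LL_lower (d := d) hk0; rw [hLdef]; linarith
  have h2kL : 2*k ≤ L := by have := LL_lower (d := d) hk0; rw [hLdef]; linarith
  have hL4k : L ≤ 4*k := by
    have := LL_upper (d := d) k
    rw [hLdef]; linarith
  have h2k : (0:ℝ) < 2*k := by linarith
  set p : ℕ := d + 2*n with hp
  have hr1 : rr (p:ℝ) (2*k) ≤ rr (p:ℝ) L * 2 ^ p := by
    calc rr (p:ℝ) (2*k) ≤ rr (p:ℝ) L * (L / (2*k)) ^ p := rr_nat_mono h2k h2kL
      _ ≤ rr (p:ℝ) L * 2 ^ p := by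
          apply mul_le_mul_of_nonneg_left _ (rr_pos (by positivity) hL).le
          apply pow_le_pow_left₀ (by positivity)
          rw [div_le_iff₀ h2k]; linarith
  have hr4 : rr (1/2) k ^ p ≤ 1 := by
    apply pow_le_one₀ (rr_pos (by norm_num) hk0).le
    exact rr_le_one (by norm_num) (by norm_num) hk0
  have hr3 : 1/2 ≤ rr ((d:ℝ)/2 + n) k := rr_ge_half (by positivity) hk1
  have hr2pos : 0 < rr (p:ℝ) L := rr_pos (by positivity) hL
  have hr3pos : 0 < rr ((d:ℝ)/2 + n) k := rr_pos (by positivity) hk0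
  have hr1pos : 0 < rr (p:ℝ) (2*k) := rr_pos (by positivity) h2k
  have hr4pos : 0 < rr (1/2) k ^ p := pow_pos (rr_pos (by norm_num) hk0) p
  rw [wcoef_eq d n hα hk0, ← hLdef, ← hp]
  have hcc : ((Real.sqrt α) ^ p * (n.factorial : ℝ))⁻¹ = ccoef d α n := by rw [ccoef, hp]
  rw [hcc]
  apply mul_le_mul_of_nonneg_right _ (ccoef_pos hα n).le
  calc rr (p:ℝ) (2*k) * rr (1/2) k ^ p / (rr (p:ℝ) L * rr ((d:ℝ)/2 + n) k)
      ≤ (rr (p:ℝ) L * 2 ^ p) * 1 / (rr (p:ℝ) L * (1/2)) := by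
        apply div_le_div₀ (by positivity)
        · exact mul_le_mul hr1 hr4 hr4pos.le (by positivity)
        · positivity
        · exact mul_le_mul_of_nonneg_left hr3 hr2pos.le
    _ = 2 ^ (p + 1) := by
        field_simp
        ring
    _ = 2 ^ (d + 2*n + 1) := by rw [hp]

/-! ### Summability and tsum identities -/

lemma summable_bound (d : ℕ) {α : ℝ} (hα : 0 < α) (x : ℝ) :
    Summable (fun n : ℕ => (2:ℝ) ^ (d + 2*n + 1) * ccoef d α n * x ^ n) := by
  have hαs : (0:ℝ) < Real.sqrt α := Real.sqrt_pos.2 hα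
  have h := (Real.summable_pow_div_factorial (4 * x / α)).mul_left
    ((2:ℝ)^(d+1) * ((Real.sqrt α)^d)⁻¹)
  apply h.congr
  intro n
  have hfac : (0:ℝ) < (n.factorial : ℝ) := by positivity
  rw [ccoef_def, pow_add (Real.sqrt α) d (2*n), pow_mul, Real.sq_sqrt hα.le,
    show d + 2*n + 1 = (d+1) + 2*n by ring, pow_add ((2:ℝ)) (d+1) (2*n), pow_mul,
    div_pow, mul_pow]
  field_simp
  ring

lemma summable_c (d : ℕ) {α : ℝ} (hα : 0 < α) (x : ℝ) :
    Summable (fun n : ℕ => ccoef d α n * x ^ n) := by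
  have hαs : (0:ℝ) < Real.sqrt α := Real.sqrt_pos.2 hα
  have h := (Real.summable_pow_div_factorial (x / α)).mul_left (((Real.sqrt α)^d)⁻¹)
  apply h.congr
  intro n
  have hfac : (0:ℝ) < (n.factorial : ℝ) := by positivity
  rw [ccoef_def, pow_add (Real.sqrt α) d (2*n), pow_mul, Real.sq_sqrt hα.le, div_pow]
  field_simp
  all_goals exact Or.inl trivial

lemma tsum_c (d : ℕ) {α : ℝ} (hα : 0 < α) (x : ℝ) :
    ∑' n : ℕ, ccoef d α n * x ^ n = ((Real.sqrt α)^d)⁻¹ * Real.exp (x/α) := by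
  have hαs : (0:ℝ) < Real.sqrt α := Real.sqrt_pos.2 hα
  have hexp : Real.exp (x/α) = ∑' n : ℕ, (x/α)^n / n.factorial := by
    rw [Real.exp_eq_exp_ℝ, NormedSpace.exp_eq_tsum_div]
  rw [hexp, ← tsum_mul_left]
  apply tsum_congr
  intro n
  have hfac : (0:ℝ) < (n.factorial : ℝ) := by positivity
  rw [ccoef_def, pow_add (Real.sqrt α) d (2*n), pow_mul, Real.sq_sqrt hα.le, div_pow]
  field_simp
  all_goals exact Or.inl trivial

lemma target_eq (d : ℕ) {α : ℝ} (hα : 0 < α) (z : ℝ) :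
    (2*α) ^ (-(d:ℝ)/2) * Real.exp (-z^2/(4*α))
      = (2:ℝ)^(-(d:ℝ)/2) * (((Real.sqrt α)^d)⁻¹ * Real.exp ((-z^2/4)/α)) := by
  have h1 : (-z^2/4)/α = -z^2/(4*α) := by rw [div_div]
  have h2 : ((2*α)) ^ (-(d:ℝ)/2) = (2:ℝ)^(-(d:ℝ)/2) * α^(-(d:ℝ)/2) :=
    Real.mul_rpow (by norm_num) hα.le
  have h3 : α^(-(d:ℝ)/2) = ((Real.sqrt α)^d)⁻¹ := by
    rw [show -(d:ℝ)/2 = -((1/2)*(d:ℝ)) by ring, Real.rpow_neg hα.le, Real.rpow_mul hα.le,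
      ← Real.sqrt_eq_rpow, Real.rpow_natCast]
  rw [h2, h3, h1, mul_assoc]

theorem fourier_transform_convergence (d : ℕ) (hd : 0 < d) (α : ℝ) (hα : 0 < α) :
    (∀ z : ℝ, 0 ≤ z →
      Tendsto (fun m : ℕ => fourierPsi d α (((m : ℝ) + 1) / 2) z) atTop
        (nhds ((2 * α) ^ (-(d : ℝ) / 2) * Real.exp (-z ^ 2 / (4 * α))))) ∧
    (∀ Z : ℝ, 0 < Z →
      TendstoUniformlyOn (fun m : ℕ => fun z : ℝ => fourierPsi d α (((m : ℝ) + 1) / 2) z)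
        (fun z => (2 * α) ^ (-(d : ℝ) / 2) * Real.exp (-z ^ 2 / (4 * α)))
        atTop (Set.Icc 0 Z)) := by
  have huniform : ∀ Z : ℝ, 0 < Z →
      TendstoUniformlyOn (fun m : ℕ => fun z : ℝ => fourierPsi d α (((m : ℝ) + 1) / 2) z)
        (fun z => (2 * α) ^ (-(d : ℝ) / 2) * Real.exp (-z ^ 2 / (4 * α)))
        atTop (Set.Icc 0 Z) := by
    intro Z hZ
    have hEterm : ∀ n : ℕ, Tendsto
        (fun m : ℕ => |wcoef d α (((m:ℝ)+1)/2) n - ccoef d α n| * (Z^2/4)^n) atTop (nhds 0) := by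
      intro n
      have := (((wcoef_tendsto d hα n).sub
        (tendsto_const_nhds (x := ccoef d α n))).abs).mul_const ((Z^2/4)^n)
      simpa using this
    have hbound_sum : Summable (fun n : ℕ => ((2:ℝ)^(d+2*n+1) + 1) * ccoef d α n * (Z^2/4)^n) := by
      apply ((summable_bound d hα (Z^2/4)).add (summable_c d hα (Z^2/4))).congr
      intro n
      ring
    have hE : Tendsto (fun m : ℕ =>
        ∑' n : ℕ, |wcoef d α (((m:ℝ)+1)/2) n - ccoef d α n| * (Z^2/4)^n) atTop (nhds 0) := by
      rw [show (0:ℝ) = ∑' (_ : ℕ), (0:ℝ) by simp]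
      apply tendsto_tsum_of_dominated_convergence hbound_sum hEterm
      filter_upwards [eventually_ge_atTop (d + 3)] with m hm n
      have hk : (d:ℝ)/2 + 2 ≤ ((m:ℝ)+1)/2 := by
        have : (d:ℝ) + 3 ≤ (m:ℝ) := by exact_mod_cast hm
        linarith
      have hk0 : (0:ℝ) < ((m:ℝ)+1)/2 := by positivity
      have h1 := wcoef_le_bound d n hα hk
      have h2 := wcoef_nonneg d n hα hk0
      have hc := (ccoef_pos (d := d) hα n).le
      have hpow : (0:ℝ) ≤ ((2:ℝ)^(d+2*n+1)) * ccoef d α n := by positivity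
      rw [Real.norm_eq_abs, abs_of_nonneg (by positivity)]
      apply mul_le_mul_of_nonneg_right _ (by positivity)
      rw [abs_le]
      constructor <;> nlinarith
    rw [Metric.tendstoUniformlyOn_iff]
    intro ε hε
    filter_upwards [hE.eventually_lt_const hε, eventually_ge_atTop (d + 3)] with m hm1 hm2
    intro z hziz
    obtain ⟨hz0, hzZ⟩ := hziz
    have hk : (d:ℝ)/2 + 2 ≤ ((m:ℝ)+1)/2 := by
      have : (d:ℝ) + 3 ≤ (m:ℝ) := by exact_mod_cast hm2
      linarith
    have hk0 : (0:ℝ) < ((m:ℝ)+1)/2 := by positivity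
    have hz2 : z^2 ≤ Z^2 := by nlinarith
    have hxabs : |(-z^2/4 : ℝ)| ≤ Z^2/4 := by
      have hxneg : (-z^2/4 : ℝ) ≤ 0 := by nlinarith [sq_nonneg z]
      rw [abs_of_nonpos hxneg]
      linarith
    set k : ℝ := ((m:ℝ)+1)/2 with hkdef
    have hsum_w : Summable (fun n : ℕ => wcoef d α k n * (-z^2/4)^n) := by
      apply Summable.of_norm_bounded (summable_bound d hα (Z^2/4))
      intro n
      rw [Real.norm_eq_abs, abs_mul, abs_of_nonneg (wcoef_nonneg d n hα hk0), abs_pow]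
      exact mul_le_mul (wcoef_le_bound d n hα hk)
        (pow_le_pow_left₀ (abs_nonneg _) hxabs n) (by positivity)
        (mul_nonneg (by positivity) (ccoef_pos (d := d) hα n).le)
    have hsum_c : Summable (fun n : ℕ => ccoef d α n * (-z^2/4)^n) := by
      apply Summable.of_norm_bounded (summable_c d hα (Z^2/4))
      intro n
      rw [Real.norm_eq_abs, abs_mul, abs_of_nonneg (ccoef_pos (d := d) hα n).le, abs_pow]
      exact mul_le_mul_of_nonneg_left (pow_le_pow_left₀ (abs_nonneg _) hxabs n)
        (ccoef_pos (d := d) hα n).le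
    have hdiff_sum : Summable (fun n : ℕ => |wcoef d α k n - ccoef d α n| * (Z^2/4)^n) := by
      apply Summable.of_nonneg_of_le (fun n => by positivity) _ hbound_sum
      intro n
      apply mul_le_mul_of_nonneg_right _ (by positivity)
      have h1 := wcoef_le_bound d n hα hk
      have h2 := wcoef_nonneg d n hα hk0
      have hc := (ccoef_pos (d := d) hα n).le
      have hp0 : (0:ℝ) ≤ 2^(d+2*n+1) * ccoef d α n := by positivity
      rw [abs_le]
      constructor <;> nlinarith
    rw [Real.dist_eq, target_eq d hα z, ← tsum_c d hα (-z^2/4)]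
    simp only [fourierPsi]
    rw [show -(d:ℝ)/2 = (-(d:ℝ))/2 by ring] at *
    rw [← mul_sub, abs_mul, abs_of_nonneg (Real.rpow_nonneg (by norm_num) _)]
    have h2le1 : ((2:ℝ)) ^ ((-(d:ℝ))/2) ≤ 1 := by
      apply Real.rpow_le_one_of_one_le_of_nonpos (by norm_num)
      have : (0:ℝ) ≤ (d:ℝ) := Nat.cast_nonneg d
      linarith
    have habs : |(∑' n : ℕ, ccoef d α n * (-z^2/4)^n) - ∑' n : ℕ, wcoef d α k n * (-z^2/4)^n|
        ≤ ∑' n : ℕ, |wcoef d α k n - ccoef d α n| * (Z^2/4)^n := by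
      rw [← Summable.tsum_sub hsum_c hsum_w]
      have hnormsum : Summable (fun n : ℕ =>
          ‖ccoef d α n * (-z^2/4)^n - wcoef d α k n * (-z^2/4)^n‖) := by
        simpa [Real.norm_eq_abs] using (hsum_c.sub hsum_w).abs
      calc |∑' n : ℕ, (ccoef d α n * (-z^2/4)^n - wcoef d α k n * (-z^2/4)^n)|
          = ‖∑' n : ℕ, (ccoef d α n * (-z^2/4)^n - wcoef d α k n * (-z^2/4)^n)‖ :=
            (Real.norm_eq_abs _).symm
        _ ≤ ∑' n : ℕ, ‖ccoef d α n * (-z^2/4)^n - wcoef d α k n * (-z^2/4)^n‖ :=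
            norm_tsum_le_tsum_norm hnormsum
        _ ≤ ∑' n : ℕ, |wcoef d α k n - ccoef d α n| * (Z^2/4)^n := by
            apply Summable.tsum_le_tsum _ hnormsum hdiff_sum
            intro n
            rw [Real.norm_eq_abs, ← sub_mul, abs_mul, abs_sub_comm, abs_pow]
            exact mul_le_mul_of_nonneg_left (pow_le_pow_left₀ (abs_nonneg _) hxabs n)
              (abs_nonneg _)
    calc (2:ℝ) ^ ((-(d:ℝ))/2) *
          |(∑' n : ℕ, ccoef d α n * (-z^2/4)^n) - ∑' n : ℕ, wcoef d α k n * (-z^2/4)^n|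
        ≤ 1 * ∑' n : ℕ, |wcoef d α k n - ccoef d α n| * (Z^2/4)^n :=
          mul_le_mul h2le1 habs (abs_nonneg _) zero_le_one
      _ = ∑' n : ℕ, |wcoef d α k n - ccoef d α n| * (Z^2/4)^n := one_mul _
      _ < ε := hm1
  refine ⟨fun z hz => (huniform (z+1) (by linarith)).tendsto_at ⟨hz, by linarith⟩, huniform⟩
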